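/- Let Y be a cocomplete 𝒯-category. Then composition with the Yoneda functor y_X: X → X̂ defines an equivalence of ordered sets from the left adjoint 𝒯-functors X̂ → Y to the 𝒯-functors X → Y: for every 𝒯-functor f: X → Y there is a left adjoint 𝒯-functor f_L: X̂ → Y, unique up to equivalence, with f_L · y_X ≅ f; its right adjoint is ⟨f_*⟩: Y → X̂; and f ≤ f' implies f_L ≤ f'_L. -/

import Mathlib

/-!
`f_L` is the colimit of `f` weighted by the evaluation module `ε : X ⇸∘ X̂`, `ε(𝔵, ψ) = ψ(𝔵)`,
which exists since `Y` is cocomplete. Unfolding `f_* ⟜ ε` gives `(f_L)_* = ⟨f_*⟩^*`, and an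
identity `g_* = d^*` of modules amounts to an adjunction `g ⊣ d`. Conversely, if `g ⊣ d` and
`g · y_X ≅ f`, the Yoneda lemma gives `d(y)(𝔵) = X̂(T y_X 𝔵, d y) = g_*(T y_X 𝔵, y) = f_*(𝔵, y)`,
so `d = ⟨f_*⟩` and `g_* = d^*` depends only, and monotonically, on `f`.
-/

universe u

namespace Paper

/-- A strict topological theory `𝒯 = (𝕋, V, ξ)`: a commutative unital quantale `V`
(a complete lattice with a commutative monoid structure whose multiplication preserves
suprema in each variable, with `⊥ < k`), a `Set`-monad `𝕋 = (T, e, m)` such that `T`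
sends pullbacks to weak pullbacks and the naturality squares of `m` are weak pullbacks,
and a `𝕋`-algebra structure `ξ : T V → V` for which `⊗` and `k` are `𝕋`-algebra
homomorphisms and `ξ_X := ξ ∘ T(-)` is a (monotone) natural transformation
`P_V → P_V T`. -/
structure TopTheory (V : Type u) [CompleteLattice V] (T : Type u → Type u) where
  tens : V → V → V
  unit : V
  tens_comm : ∀ u v : V, tens u v = tens v u
  tens_assoc : ∀ u v w : V, tens (tens u v) w = tens u (tens v w)
  unit_tens : ∀ v : V, tens unit v = v
  tens_sSup : ∀ (u : V) (S : Set V), tens u (sSup S) = ⨆ v ∈ S, tens u v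
  bot_lt_unit : (⊥ : V) < unit
  map : ∀ {X Y : Type u}, (X → Y) → T X → T Y
  map_id : ∀ {X : Type u}, map (id : X → X) = id
  map_comp : ∀ {X Y Z : Type u} (g : Y → Z) (f : X → Y) (𝔵 : T X),
    map (g ∘ f) 𝔵 = map g (map f 𝔵)
  e : ∀ {X : Type u}, X → T X
  m : ∀ {X : Type u}, T (T X) → T X
  e_nat : ∀ {X Y : Type u} (f : X → Y) (x : X), map f (e x) = e (f x)
  m_nat : ∀ {X Y : Type u} (f : X → Y) (𝔛 : T (T X)), map f (m 𝔛) = m (map (map f) 𝔛)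
  m_e : ∀ {X : Type u} (𝔵 : T X), m (e 𝔵) = 𝔵
  m_map_e : ∀ {X : Type u} (𝔵 : T X), m (map e 𝔵) = 𝔵
  m_assoc : ∀ {X : Type u} (𝔜 : T (T (T X))), m (m 𝔜) = m (map m 𝔜)
  /-- (BC): `T` sends pullbacks to weak pullbacks. -/
  map_bc : ∀ {X Y Z : Type u} (f : X → Z) (g : Y → Z) (𝔵 : T X) (𝔶 : T Y),
    map f 𝔵 = map g 𝔶 →
    ∃ 𝔴 : T {p : X × Y // f p.1 = g p.2},
      map (fun p => p.1.1) 𝔴 = 𝔵 ∧ map (fun p => p.1.2) 𝔴 = 𝔶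
  /-- (BC): every naturality square of `m` is a weak pullback. -/
  m_bc : ∀ {X Y : Type u} (f : X → Y) (𝔜 : T (T Y)) (𝔵 : T X),
    m 𝔜 = map f 𝔵 → ∃ 𝔛 : T (T X), map (map f) 𝔛 = 𝔜 ∧ m 𝔛 = 𝔵
  xi : T V → V
  xi_e : ∀ v : V, xi (e v) = v
  xi_m : ∀ 𝔙 : T (T V), xi (m 𝔙) = xi (map xi 𝔙)
  /-- `k : 1 → V` is a `𝕋`-algebra homomorphism. -/
  xi_unit : ∀ {X : Type u} (𝔵 : T X), xi (map (fun _ => unit) 𝔵) = unit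
  /-- `⊗ : V × V → V` is a `𝕋`-algebra homomorphism. -/
  xi_tens : ∀ 𝔴 : T (V × V),
    xi (map (fun p => tens p.1 p.2) 𝔴) = tens (xi (map Prod.fst 𝔴)) (xi (map Prod.snd 𝔴))
  /-- each component `ξ_X : V^X → V^{T X}` is monotone. -/
  xi_mono : ∀ {X : Type u} (φ φ' : X → V), (∀ x, φ x ≤ φ' x) →
    ∀ 𝔵 : T X, xi (map φ 𝔵) ≤ xi (map φ' 𝔵)
  /-- `ξ_X` is a natural transformation `P_V → P_V T`. -/
  xi_nat : ∀ {X Y : Type u} (f : X → Y) (φ : X → V) (𝔶 : T Y),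
    (⨆ 𝔵 : {𝔵 : T X // map f 𝔵 = 𝔶}, xi (map φ 𝔵.1)) =
      xi (map (fun y => ⨆ x : {x : X // f x = y}, φ x.1) 𝔶)

namespace TopTheory

variable {V : Type u} [CompleteLattice V] {T : Type u → Type u}

/-- The internal hom of the quantale: `u ⊗ (-) ⊣ hom (u, -)`. -/
def ihom (𝒯 : TopTheory V T) (u w : V) : V := sSup {z | 𝒯.tens u z ≤ w}

/-- The extension `T_ξ` of `T : Set → Set` to `V`-relations. -/
def Txi (𝒯 : TopTheory V T) {X Y : Type u} (r : X → Y → V) (𝔵 : T X) (𝔶 : T Y) : V :=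
  ⨆ 𝔴 : {w : T (X × Y) // 𝒯.map Prod.fst w = 𝔵 ∧ 𝒯.map Prod.snd w = 𝔶},
    𝒯.xi (𝒯.map (fun p => r p.1 p.2) 𝔴.1)

/-- Kleisli convolution `β ∘ α = β · T_ξ α · m_X°` of `𝒯`-relations
`α : X ⇸ Y` and `β : Y ⇸ Z`. -/
def kleisli (𝒯 : TopTheory V T) {X Y Z : Type u}
    (β : T Y → Z → V) (α : T X → Y → V) (𝔵 : T X) (z : Z) : V :=
  ⨆ 𝔛 : {𝔛 : T (T X) // 𝒯.m 𝔛 = 𝔵}, ⨆ 𝔶 : T Y, 𝒯.tens (𝒯.Txi α 𝔛.1 𝔶) (β 𝔶 z)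

/-- The `𝒯`-relation `e_X° : X ⇸ X`. -/
def unitRel (𝒯 : TopTheory V T) (X : Type u) (𝔵 : T X) (x : X) : V :=
  ⨆ _ : 𝔵 = 𝒯.e x, 𝒯.unit

/-- A `𝒯`-category structure on `X`: a `𝒯`-relation `a : X ⇸ X` with
`e_X° ≤ a` and `a ∘ a ≤ a`. -/
structure TCatStr (𝒯 : TopTheory V T) (X : Type u) where
  rel : T X → X → V
  le_refl : ∀ x : X, 𝒯.unit ≤ rel (𝒯.e x) x
  comp : ∀ (𝔵 : T X) (x : X), 𝒯.kleisli rel rel 𝔵 x ≤ rel 𝔵 x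

/-- The `𝒯`-module conditions `φ ∘ a ≤ φ` and `b ∘ φ ≤ φ` for a `𝒯`-relation
`φ : X ⇸ Y` between (structures underlying) `𝒯`-categories `(X,a)` and `(Y,b)`. -/
def IsTModRel (𝒯 : TopTheory V T) {X Y : Type u}
    (a : T X → X → V) (b : T Y → Y → V) (φ : T X → Y → V) : Prop :=
  (∀ 𝔵 y, 𝒯.kleisli φ a 𝔵 y ≤ φ 𝔵 y) ∧ (∀ 𝔵 y, 𝒯.kleisli b φ 𝔵 y ≤ φ 𝔵 y)

variable {𝒯 : TopTheory V T}

/-- `f_* = b · T f`. -/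
def modStar {X Y : Type u} (b : 𝒯.TCatStr Y) (f : X → Y) (𝔵 : T X) (y : Y) : V :=
  b.rel (𝒯.map f 𝔵) y

/-- `f^* = f° · b`. -/
def modCostar {X Y : Type u} (b : 𝒯.TCatStr Y) (f : X → Y) (𝔶 : T Y) (x : X) : V :=
  b.rel 𝔶 (f x)

/-- The extension `φ ⟜ ψ` of `φ : X ⇸∘ Y` along `ψ : X ⇸∘ Z`, given by
`(φ ⟜ ψ)(𝔷,y) = ⋀_{𝔵 ∈ T X} hom((T_ξ ψ · m_X°)(𝔵,𝔷), φ(𝔵,y))`. -/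
def extend (𝒯 : TopTheory V T) {X Y Z : Type u}
    (φ : T X → Y → V) (ψ : T X → Z → V) (𝔷 : T Z) (y : Y) : V :=
  ⨅ 𝔵 : T X, 𝒯.ihom (⨆ 𝔛 : {𝔛 : T (T X) // 𝒯.m 𝔛 = 𝔵}, 𝒯.Txi ψ 𝔛.1 𝔷) (φ 𝔵 y)

/-- A `𝒯`-functor `f : (X,a) → (Y,b)`. -/
def IsTFunctor {X Y : Type u} (a : 𝒯.TCatStr X) (b : 𝒯.TCatStr Y) (f : X → Y) : Prop :=
  ∀ (𝔵 : T X) (x : X), a.rel 𝔵 x ≤ b.rel (𝒯.map f 𝔵) (f x)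

/-- A fully faithful `𝒯`-functor. -/
def FullyFaithful {X Y : Type u} (a : 𝒯.TCatStr X) (b : 𝒯.TCatStr Y) (f : X → Y) : Prop :=
  ∀ (𝔵 : T X) (x : X), a.rel 𝔵 x = b.rel (𝒯.map f 𝔵) (f x)

/-- The order `f ≤ g ⟺ f^* ≤ g^*` on `𝒯`-functors `X → (Y,b)`. -/
def funLE {X Y : Type u} (b : 𝒯.TCatStr Y) (f g : X → Y) : Prop :=
  ∀ (𝔶 : T Y) (x : X), b.rel 𝔶 (f x) ≤ b.rel 𝔶 (g x)

/-- Equivalence `f ≅ g ⟺ f^* = g^*` of `𝒯`-functors `X → (Y,b)`. -/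
def FunEquiv {X Y : Type u} (b : 𝒯.TCatStr Y) (f g : X → Y) : Prop :=
  ∀ (𝔶 : T Y) (x : X), b.rel 𝔶 (f x) = b.rel 𝔶 (g x)

/-- `f ⊣ g`:  `1_X ≤ g·f` and `f·g ≤ 1_Y`. -/
def IsAdjunction {X Y : Type u} (a : 𝒯.TCatStr X) (b : 𝒯.TCatStr Y)
    (f : X → Y) (g : Y → X) : Prop :=
  (∀ (𝔵 : T X) (x : X), a.rel 𝔵 x ≤ a.rel 𝔵 (g (f x))) ∧
    (∀ (𝔶 : T Y) (y : Y), b.rel 𝔶 (f (g y)) ≤ b.rel 𝔶 y)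

/-- A left adjoint `𝒯`-functor. -/
def IsLeftAdjoint {X Y : Type u} (a : 𝒯.TCatStr X) (b : 𝒯.TCatStr Y) (f : X → Y) : Prop :=
  IsTFunctor a b f ∧ ∃ g : Y → X, IsTFunctor b a g ∧ IsAdjunction a b f g

/-- L-separatedness: equivalent `𝒯`-functors into `X` are equal. -/
def Separated {X : Type u} (a : 𝒯.TCatStr X) : Prop :=
  ∀ (A : Type u) (as : 𝒯.TCatStr A) (f g : A → X),
    IsTFunctor as a f → IsTFunctor as a g → FunEquiv a f g → f = g

/-- Injectivity with respect to fully faithful `𝒯`-functors. -/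
def Injective {X : Type u} (a : 𝒯.TCatStr X) : Prop :=
  ∀ (A B : Type u) (as : 𝒯.TCatStr A) (bs : 𝒯.TCatStr B) (f : A → X) (i : A → B),
    IsTFunctor as a f → IsTFunctor as bs i → FullyFaithful as bs i →
      ∃ g : B → X, IsTFunctor bs a g ∧ FunEquiv a (g ∘ i) f

/-- `g : Z → X` is the `ψ`-weighted colimit of `h : A → X`, i.e. `g_* = h_* ⟜ ψ`. -/
def IsColimit {X A Z : Type u} (a : 𝒯.TCatStr X) (h : A → X) (ψ : T A → Z → V)
    (g : Z → X) : Prop :=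
  ∀ (𝔷 : T Z) (x : X), modStar a g 𝔷 x = 𝒯.extend (modStar a h) ψ 𝔷 x

/-- Cocompleteness: every weighted diagram has a colimit. -/
def Cocomplete {X : Type u} (a : 𝒯.TCatStr X) : Prop :=
  ∀ (A Z : Type u) (as : 𝒯.TCatStr A) (cs : 𝒯.TCatStr Z) (h : A → X),
    IsTFunctor as a h → ∀ ψ : T A → Z → V, 𝒯.IsTModRel as.rel cs.rel ψ →
      ∃ g : Z → X, IsTFunctor cs a g ∧ IsColimit a h ψ g

/-- Cocontinuity: preservation of all weighted colimits. -/
def Cocontinuous {X Y : Type u} (a : 𝒯.TCatStr X) (b : 𝒯.TCatStr Y) (f : X → Y) : Prop :=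
  ∀ (A Z : Type u) (as : 𝒯.TCatStr A) (cs : 𝒯.TCatStr Z) (h : A → X)
    (ψ : T A → Z → V) (g : Z → X),
    IsTFunctor as a h → 𝒯.IsTModRel as.rel cs.rel ψ → IsTFunctor cs a g →
      IsColimit a h ψ g → IsColimit b (f ∘ h) ψ (f ∘ g)

/-- A presheaf on `(X,a)`: a `𝒯`-module `X ⇸∘ G`, where `G = (1, e_1°)`. -/
def IsPresheaf {X : Type u} (a : 𝒯.TCatStr X) (ψ : T X → V) : Prop :=
  𝒯.IsTModRel a.rel (𝒯.unitRel PUnit) (fun 𝔵 _ => ψ 𝔵)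

/-- The underlying set of the presheaf `𝒯`-category `X̂`. -/
def Hat {X : Type u} (a : 𝒯.TCatStr X) : Type u := {ψ : T X → V // IsPresheaf a ψ}

/-- The `𝒯`-category structure `⟦-,-⟧` of `V^{|X|}`. -/
def powRel (𝒯 : TopTheory V T) (X : Type u) (𝔭 : T (T X → V)) (ψ : T X → V) : V :=
  ⨅ 𝔮 : {q : T ((T X) × (T X → V)) // 𝒯.map Prod.snd q = 𝔭},
    𝒯.ihom (𝒯.xi (𝒯.map (fun p => p.2 p.1) 𝔮.1)) (ψ (𝒯.m (𝒯.map Prod.fst 𝔮.1)))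

/-- `hs` is the `𝒯`-category structure on `X̂` inherited from `V^{|X|}`. -/
def IsHatStr {X : Type u} (a : 𝒯.TCatStr X) (hs : 𝒯.TCatStr (Hat a)) : Prop :=
  ∀ (𝔭 : T (Hat a)) (ψ : Hat a), hs.rel 𝔭 ψ = 𝒯.powRel X (𝒯.map Subtype.val 𝔭) ψ.1

/-- `y` is the Yoneda functor `X → X̂`, `y x = a(-,x)`. -/
def IsYoneda {X : Type u} (a : 𝒯.TCatStr X) (y : X → Hat a) : Prop :=
  ∀ (x : X) (𝔵 : T X), (y x).1 𝔵 = a.rel 𝔵 x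

/-- The underlying map `ψ ↦ ψ ∘ f^*` of `f̂ : X̂ → Ŷ`. -/
def hatMapRel {X Y : Type u} (b : 𝒯.TCatStr Y) (f : X → Y) (ψ : T X → V) (𝔶 : T Y) : V :=
  𝒯.kleisli (fun 𝔵 (_ : PUnit.{u + 1}) => ψ 𝔵) (modCostar b f) 𝔶 PUnit.unit

/-- `fh` is the `𝒯`-functor `f̂ : X̂ → Ŷ`, with underlying map `ψ ↦ ψ ∘ f^*`. -/
def IsHatMap {X Y : Type u} (a : 𝒯.TCatStr X) (b : 𝒯.TCatStr Y) (f : X → Y)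
    (fh : Hat a → Hat b) : Prop :=
  ∀ (ψ : Hat a) (𝔶 : T Y), (fh ψ).1 𝔶 = hatMapRel b f ψ.1 𝔶

/-- An inhabited `𝒯`-module: `k ≤ ⋀_y ⋁_𝔵 φ(𝔵,y)`. -/
def InhabitedMod (𝒯 : TopTheory V T) {X Y : Type u} (φ : T X → Y → V) : Prop :=
  𝒯.unit ≤ ⨅ y : Y, ⨆ 𝔵 : T X, φ 𝔵 y

/-- A dense `𝒯`-functor: `f_*` is inhabited. -/
def Dense {X Y : Type u} (b : 𝒯.TCatStr Y) (f : X → Y) : Prop :=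
  𝒯.InhabitedMod (modStar b f)

/-- The underlying set of `X⁺ = {ψ ∈ X̂ ∣ ψ inhabited}`. -/
def Plus {X : Type u} (a : 𝒯.TCatStr X) : Type u :=
  {ψ : Hat a // 𝒯.InhabitedMod (fun 𝔵 (_ : PUnit.{u + 1}) => ψ.1 𝔵)}

/-- `ps` is the `𝒯`-category structure on `X⁺` inherited from `X̂`. -/
def IsPlusStr {X : Type u} (a : 𝒯.TCatStr X) (hs : 𝒯.TCatStr (Hat a))
    (ps : 𝒯.TCatStr (Plus a)) : Prop :=
  ∀ (𝔭 : T (Plus a)) (ψ : Plus a), ps.rel 𝔭 ψ = hs.rel (𝒯.map Subtype.val 𝔭) ψ.1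

/-- Inhabited-cocompleteness: all colimits with inhabited weights exist. -/
def ICocomplete {X : Type u} (a : 𝒯.TCatStr X) : Prop :=
  ∀ (A Z : Type u) (as : 𝒯.TCatStr A) (cs : 𝒯.TCatStr Z) (h : A → X),
    IsTFunctor as a h → ∀ ψ : T A → Z → V, 𝒯.IsTModRel as.rel cs.rel ψ →
      𝒯.InhabitedMod ψ → ∃ g : Z → X, IsTFunctor cs a g ∧ IsColimit a h ψ g

/-- Inhabited-cocontinuity: preservation of all colimits with inhabited weights. -/
def ICocontinuous {X Y : Type u} (a : 𝒯.TCatStr X) (b : 𝒯.TCatStr Y) (f : X → Y) : Prop :=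
  ∀ (A Z : Type u) (as : 𝒯.TCatStr A) (cs : 𝒯.TCatStr Z) (h : A → X)
    (ψ : T A → Z → V) (g : Z → X),
    IsTFunctor as a h → 𝒯.IsTModRel as.rel cs.rel ψ → 𝒯.InhabitedMod ψ →
      IsTFunctor cs a g → IsColimit a h ψ g → IsColimit b (f ∘ h) ψ (f ∘ g)

section Quantale

variable (𝒯)

lemma tens_iSup {ι : Sort*} (u : V) (v : ι → V) :
    𝒯.tens u (⨆ i, v i) = ⨆ i, 𝒯.tens u (v i) := by
  rw [← sSup_range, 𝒯.tens_sSup, iSup_range]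

lemma tens_iSup_left {ι : Sort*} (v : ι → V) (u : V) :
    𝒯.tens (⨆ i, v i) u = ⨆ i, 𝒯.tens (v i) u := by
  simp only [𝒯.tens_comm _ u, 𝒯.tens_iSup]

lemma tens_mono_right {u z z' : V} (h : z ≤ z') : 𝒯.tens u z ≤ 𝒯.tens u z' :=
  calc 𝒯.tens u z ≤ ⨆ v ∈ Set.Iic z', 𝒯.tens u v := le_biSup (𝒯.tens u) h
    _ = 𝒯.tens u z' := by rw [← 𝒯.tens_sSup, csSup_Iic]

lemma tens_mono_left {u u' z : V} (h : u ≤ u') : 𝒯.tens u z ≤ 𝒯.tens u' z := by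
  rw [𝒯.tens_comm u, 𝒯.tens_comm u']
  exact 𝒯.tens_mono_right h

lemma le_ihom_iff {z u w : V} : z ≤ 𝒯.ihom u w ↔ 𝒯.tens u z ≤ w := by
  refine ⟨fun h => (𝒯.tens_mono_right h).trans ?_, fun h => le_sSup h⟩
  rw [ihom, 𝒯.tens_sSup]
  exact iSup₂_le fun _ hv => hv

lemma tens_ihom_le {u w : V} : 𝒯.tens u (𝒯.ihom u w) ≤ w :=
  (𝒯.le_ihom_iff).mp le_rfl

lemma ihom_mono {u w w' : V} (h : w ≤ w') : 𝒯.ihom u w ≤ 𝒯.ihom u w' :=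
  sSup_le_sSup fun _ hz => hz.trans h

lemma ihom_anti {u u' w : V} (h : u ≤ u') : 𝒯.ihom u' w ≤ 𝒯.ihom u w :=
  (𝒯.le_ihom_iff).mpr ((𝒯.tens_mono_left h).trans 𝒯.tens_ihom_le)

lemma ihom_unit (w : V) : 𝒯.ihom 𝒯.unit w = w :=
  le_antisymm (by simpa only [𝒯.unit_tens] using 𝒯.tens_ihom_le (u := 𝒯.unit) (w := w))
    ((𝒯.le_ihom_iff).mpr (𝒯.unit_tens w).le)

end Quantale

section Monad

variable (𝒯)

lemma map_congr {X Y : Type u} {f g : X → Y} (h : ∀ x, f x = g x) (𝔵 : T X) :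
    𝒯.map f 𝔵 = 𝒯.map g 𝔵 := by
  rw [funext h]

lemma map_map {X Y Z : Type u} (g : Y → Z) (f : X → Y) (𝔵 : T X) :
    𝒯.map g (𝒯.map f 𝔵) = 𝒯.map (fun x => g (f x)) 𝔵 :=
  (𝒯.map_comp g f 𝔵).symm

lemma unit_le_xi {X : Type u} {φ : X → V} (h : ∀ x, 𝒯.unit ≤ φ x) (𝔵 : T X) :
    𝒯.unit ≤ 𝒯.xi (𝒯.map φ 𝔵) := by
  rw [← 𝒯.xi_unit 𝔵]
  exact 𝒯.xi_mono _ _ h 𝔵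

lemma le_Txi {X Y : Type u} (r : X → Y → V) {𝔵 : T X} {𝔶 : T Y}
    (𝔴 : T (X × Y)) (h₁ : 𝒯.map Prod.fst 𝔴 = 𝔵) (h₂ : 𝒯.map Prod.snd 𝔴 = 𝔶) :
    𝒯.xi (𝒯.map (fun p => r p.1 p.2) 𝔴) ≤ 𝒯.Txi r 𝔵 𝔶 :=
  le_iSup_of_le ⟨𝔴, h₁, h₂⟩ le_rfl

lemma le_kleisli {X Y Z : Type u} (β : T Y → Z → V) (α : T X → Y → V) {𝔵 : T X} {z : Z}
    (𝔛 : T (T X)) (hm : 𝒯.m 𝔛 = 𝔵) (𝔶 : T Y) :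
    𝒯.tens (𝒯.Txi α 𝔛 𝔶) (β 𝔶 z) ≤ 𝒯.kleisli β α 𝔵 z :=
  le_iSup_of_le ⟨𝔛, hm⟩ (le_iSup_of_le 𝔶 le_rfl)

end Monad

section Categories

variable {W A : Type u} (c : 𝒯.TCatStr W)

lemma TCatStr.rel_le_rel_of_unit_le {z w : W} (h : 𝒯.unit ≤ c.rel (𝒯.e z) w) (𝔴 : T W) :
    c.rel 𝔴 z ≤ c.rel 𝔴 w := by
  have hT : c.rel 𝔴 z ≤ 𝒯.Txi c.rel (𝒯.e 𝔴) (𝒯.e z) := by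
    refine le_trans ?_ (𝒯.le_Txi c.rel (𝒯.e (𝔴, z)) (𝒯.e_nat _ _) (𝒯.e_nat _ _))
    rw [𝒯.e_nat, 𝒯.xi_e]
  calc c.rel 𝔴 z = 𝒯.tens (c.rel 𝔴 z) 𝒯.unit := by rw [𝒯.tens_comm, 𝒯.unit_tens]
    _ ≤ 𝒯.tens (𝒯.Txi c.rel (𝒯.e 𝔴) (𝒯.e z)) (c.rel (𝒯.e z) w) :=
        (𝒯.tens_mono_right h).trans (𝒯.tens_mono_left hT)
    _ ≤ 𝒯.kleisli c.rel c.rel 𝔴 w := 𝒯.le_kleisli c.rel c.rel (𝒯.e 𝔴) (𝒯.m_e 𝔴) (𝒯.e z)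
    _ ≤ c.rel 𝔴 w := c.comp 𝔴 w

lemma TCatStr.rel_map_le_rel_map {g h : A → W} (hgh : ∀ x, 𝒯.unit ≤ c.rel (𝒯.e (g x)) (h x))
    (𝔞 : T A) (w : W) : c.rel (𝒯.map h 𝔞) w ≤ c.rel (𝒯.map g 𝔞) w := by
  have hm : 𝒯.m (𝒯.map (fun x => 𝒯.e (g x)) 𝔞) = 𝒯.map g 𝔞 := by
    rw [← 𝒯.map_map, 𝒯.m_map_e]
  have hT : 𝒯.unit ≤ 𝒯.Txi c.rel (𝒯.map (fun x => 𝒯.e (g x)) 𝔞) (𝒯.map h 𝔞) := by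
    refine le_trans ?_ (𝒯.le_Txi c.rel (𝒯.map (fun x => (𝒯.e (g x), h x)) 𝔞) ?_ ?_) <;>
      rw [𝒯.map_map]
    exact 𝒯.unit_le_xi hgh 𝔞
  calc c.rel (𝒯.map h 𝔞) w = 𝒯.tens 𝒯.unit (c.rel (𝒯.map h 𝔞) w) := (𝒯.unit_tens _).symm
    _ ≤ 𝒯.kleisli c.rel c.rel (𝒯.map g 𝔞) w :=
        (𝒯.tens_mono_left hT).trans (𝒯.le_kleisli c.rel c.rel _ hm _)
    _ ≤ c.rel (𝒯.map g 𝔞) w := c.comp _ w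

lemma funLE_iff_rel_map_le {f g : A → W} :
    funLE c f g ↔ ∀ (𝔞 : T A) (w : W), c.rel (𝒯.map g 𝔞) w ≤ c.rel (𝒯.map f 𝔞) w := by
  refine ⟨fun h => c.rel_map_le_rel_map fun x => (c.le_refl (f x)).trans (h _ x),
    fun h 𝔴 x => c.rel_le_rel_of_unit_le ?_ 𝔴⟩
  have hx := h (𝒯.e x) (g x)
  rw [𝒯.e_nat, 𝒯.e_nat] at hx
  exact (c.le_refl (g x)).trans hx

lemma funEquiv_iff_rel_map_eq {f g : A → W} :
    FunEquiv c f g ↔ ∀ (𝔞 : T A) (w : W), c.rel (𝒯.map f 𝔞) w = c.rel (𝒯.map g 𝔞) w := by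
  have hLE : FunEquiv c f g ↔ funLE c f g ∧ funLE c g f := by
    simp only [FunEquiv, funLE, le_antisymm_iff, forall_and]
  simp only [hLE, funLE_iff_rel_map_le, le_antisymm_iff, forall_and, and_comm]

end Categories

section Adjunctions

variable {W A : Type u} {c : 𝒯.TCatStr A} {d : 𝒯.TCatStr W} {g : A → W} {r : W → A}

lemma IsAdjunction.rel_map_eq (hg : IsTFunctor c d g) (hr : IsTFunctor d c r)
    (hadj : IsAdjunction c d g r) (𝔞 : T A) (w : W) :
    d.rel (𝒯.map g 𝔞) w = c.rel 𝔞 (r w) := by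
  refine le_antisymm ?_ ((hg 𝔞 (r w)).trans (hadj.2 _ _))
  calc d.rel (𝒯.map g 𝔞) w ≤ c.rel (𝒯.map (fun x => r (g x)) 𝔞) (r w) := by
        simpa only [𝒯.map_map] using hr (𝒯.map g 𝔞) w
    _ ≤ c.rel (𝒯.map id 𝔞) (r w) :=
        c.rel_map_le_rel_map (fun x => (c.le_refl x).trans (hadj.1 _ x)) 𝔞 (r w)
    _ = c.rel 𝔞 (r w) := by rw [𝒯.map_id, id]

lemma isTFunctor_and_isAdjunction_of_rel_map_eq
    (h : ∀ (𝔞 : T A) (w : W), d.rel (𝒯.map g 𝔞) w = c.rel 𝔞 (r w)) :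
    IsTFunctor d c r ∧ IsAdjunction c d g r := by
  have hunit : ∀ x, 𝒯.unit ≤ c.rel (𝒯.e x) (r (g x)) := fun x => by
    rw [← h, 𝒯.e_nat]
    exact d.le_refl _
  have hcounit : ∀ w, 𝒯.unit ≤ d.rel (𝒯.e (g (r w))) w := fun w => by
    rw [← 𝒯.e_nat g, h]
    exact c.le_refl _
  refine ⟨fun 𝔴 w => ?_, fun 𝔞 x => c.rel_le_rel_of_unit_le (hunit x) 𝔞,
    fun 𝔴 w => d.rel_le_rel_of_unit_le (hcounit w) 𝔴⟩
  calc d.rel 𝔴 w = d.rel (𝒯.map id 𝔴) w := by rw [𝒯.map_id, id]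
    _ ≤ d.rel (𝒯.map (fun w' => g (r w')) 𝔴) w := d.rel_map_le_rel_map hcounit 𝔴 w
    _ = c.rel (𝒯.map r 𝔴) (r w) := by rw [← 𝒯.map_map, h]

end Adjunctions

section Presheaves

variable {X : Type u} {a : 𝒯.TCatStr X} {hs : 𝒯.TCatStr (Hat a)}

lemma IsHatStr.rel_le_ihom (hhs : IsHatStr a hs) {𝔭 : T (Hat a)} (ψ : Hat a)
    {𝔴 : T (T X × Hat a)} (hw : 𝒯.map Prod.snd 𝔴 = 𝔭) :
    hs.rel 𝔭 ψ ≤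
      𝒯.ihom (𝒯.xi (𝒯.map (fun q => q.2.1 q.1) 𝔴)) (ψ.1 (𝒯.m (𝒯.map Prod.fst 𝔴))) := by
  rw [hhs]
  have hq : 𝒯.map Prod.snd (𝒯.map (fun q : T X × Hat a => (q.1, q.2.1)) 𝔴)
      = 𝒯.map Subtype.val 𝔭 := by
    rw [𝒯.map_map, ← hw]
    exact (𝒯.map_map (fun ψ : Hat a => ψ.1) Prod.snd 𝔴).symm
  refine (iInf_le _ ⟨_, hq⟩).trans ?_
  rw [𝒯.map_map, 𝒯.map_map]

lemma IsHatStr.le_rel (hhs : IsHatStr a hs) {v : V} {𝔭 : T (Hat a)} {ψ : Hat a}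
    (h : ∀ 𝔴 : T (T X × Hat a), 𝒯.map Prod.snd 𝔴 = 𝔭 →
      v ≤ 𝒯.ihom (𝒯.xi (𝒯.map (fun q => q.2.1 q.1) 𝔴)) (ψ.1 (𝒯.m (𝒯.map Prod.fst 𝔴)))) :
    v ≤ hs.rel 𝔭 ψ := by
  rw [hhs]
  refine le_iInf fun 𝔮 => ?_
  obtain ⟨𝔴, hw₁, hw₂⟩ := 𝒯.map_bc Prod.snd Subtype.val 𝔮.1 𝔭 𝔮.2
  have hv := h (𝒯.map (fun s => (s.1.1.1, s.1.2)) 𝔴) (by rw [𝒯.map_map, ← hw₂]; rfl)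
  have hfst : 𝒯.map Prod.fst (𝒯.map (fun s => (s.1.1.1, s.1.2)) 𝔴) = 𝒯.map Prod.fst 𝔮.1 := by
    rw [𝒯.map_map, ← hw₁, 𝒯.map_map]
  have hval : 𝒯.map (fun q : T X × Hat a => q.2.1 q.1) (𝒯.map (fun s => (s.1.1.1, s.1.2)) 𝔴)
      = 𝒯.map (fun p : T X × (T X → V) => p.2 p.1) 𝔮.1 := by
    rw [𝒯.map_map, ← hw₁, 𝒯.map_map]
    exact 𝒯.map_congr (fun s => by rw [s.2]) 𝔴
  rw [← hfst, ← hval]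
  exact hv

lemma IsHatStr.rel_mono (hhs : IsHatStr a hs) (𝔭 : T (Hat a)) {ψ ψ' : Hat a}
    (h : ∀ 𝔵, ψ.1 𝔵 ≤ ψ'.1 𝔵) : hs.rel 𝔭 ψ ≤ hs.rel 𝔭 ψ' := by
  rw [hhs, hhs]
  exact iInf_mono fun _ => 𝒯.ihom_mono (h _)

lemma IsHatStr.tens_Txi_eval_le (hhs : IsHatStr a hs) (𝔛 : T (T X)) (𝔭 : T (Hat a))
    (ψ : Hat a) :
    𝒯.tens (𝒯.Txi (fun 𝔵 (φ : Hat a) => φ.1 𝔵) 𝔛 𝔭) (hs.rel 𝔭 ψ) ≤ ψ.1 (𝒯.m 𝔛) := by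
  rw [Txi, 𝒯.tens_iSup_left]
  refine iSup_le fun 𝔴 => ?_
  obtain ⟨𝔴, rfl, hw₂⟩ := 𝔴
  exact (𝒯.tens_mono_right (hhs.rel_le_ihom ψ hw₂)).trans 𝒯.tens_ihom_le

lemma IsHatStr.isTModRel_eval (hhs : IsHatStr a hs) :
    𝒯.IsTModRel a.rel hs.rel (fun 𝔵 (ψ : Hat a) => ψ.1 𝔵) :=
  ⟨fun 𝔵 ψ => ψ.2.1 𝔵 PUnit.unit,
    fun _ ψ => iSup_le fun ⟨𝔛, h𝔛⟩ => iSup_le fun 𝔭 => h𝔛 ▸ hhs.tens_Txi_eval_le 𝔛 𝔭 ψ⟩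

lemma IsHatStr.rel_map_yoneda (hhs : IsHatStr a hs) {y : X → Hat a} (hy : IsYoneda a y)
    (𝔵 : T X) (ψ : Hat a) : hs.rel (𝒯.map y 𝔵) ψ = ψ.1 𝔵 := by
  apply le_antisymm
  · have hψ := hhs.rel_le_ihom ψ (𝔴 := 𝒯.map (fun x => (𝒯.e x, y x)) 𝔵) (by rw [𝒯.map_map])
    rw [𝒯.map_map, 𝒯.map_map, 𝒯.m_map_e, 𝒯.map_congr (fun x => hy x (𝒯.e x))] at hψ
    calc hs.rel (𝒯.map y 𝔵) ψ ≤ 𝒯.ihom (𝒯.xi (𝒯.map (fun x => a.rel (𝒯.e x) x) 𝔵)) (ψ.1 𝔵) := hψ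
      _ ≤ 𝒯.ihom 𝒯.unit (ψ.1 𝔵) := 𝒯.ihom_anti (𝒯.unit_le_xi a.le_refl 𝔵)
      _ = ψ.1 𝔵 := 𝒯.ihom_unit _
  · refine hhs.le_rel fun 𝔴 hw => (𝒯.le_ihom_iff).mpr ?_
    obtain ⟨𝔴₀, hw₁, hw₂⟩ := 𝒯.map_bc Prod.snd y 𝔴 𝔵 hw
    have hTxi : 𝒯.xi (𝒯.map (fun q => q.2.1 q.1) 𝔴) ≤ 𝒯.Txi a.rel (𝒯.map Prod.fst 𝔴) 𝔵 := by
      refine le_trans (le_of_eq ?_) (𝒯.le_Txi a.rel (𝒯.map (fun s => (s.1.1.1, s.1.2)) 𝔴₀) ?_ ?_)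
      · rw [← hw₁, 𝒯.map_map, 𝒯.map_map]
        exact congrArg 𝒯.xi (𝒯.map_congr (fun s => by rw [s.2, hy]) 𝔴₀)
      · rw [𝒯.map_map, ← hw₁, 𝒯.map_map]
      · rw [𝒯.map_map, ← hw₂]
    calc 𝒯.tens (𝒯.xi (𝒯.map (fun q => q.2.1 q.1) 𝔴)) (ψ.1 𝔵)
        ≤ 𝒯.tens (𝒯.Txi a.rel (𝒯.map Prod.fst 𝔴) 𝔵) (ψ.1 𝔵) := 𝒯.tens_mono_left hTxi
      _ ≤ 𝒯.kleisli (fun 𝔵' (_ : PUnit.{u + 1}) => ψ.1 𝔵') a.rel (𝒯.m (𝒯.map Prod.fst 𝔴))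
            PUnit.unit :=
          𝒯.le_kleisli (fun 𝔵' (_ : PUnit.{u + 1}) => ψ.1 𝔵') a.rel _ rfl 𝔵
      _ ≤ ψ.1 (𝒯.m (𝒯.map Prod.fst 𝔴)) := ψ.2.1 _ PUnit.unit

lemma IsHatStr.extend_eval_eq (hhs : IsHatStr a hs) {Y : Type u} {b : 𝒯.TCatStr Y}
    {f : X → Y} {mf : Y → Hat a} (hmf : ∀ (y : Y) (𝔵 : T X), (mf y).1 𝔵 = b.rel (𝒯.map f 𝔵) y)
    (𝔭 : T (Hat a)) (y : Y) :
    𝒯.extend (modStar b f) (fun 𝔵 (ψ : Hat a) => ψ.1 𝔵) 𝔭 y = hs.rel 𝔭 (mf y) := by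
  apply le_antisymm
  · refine hhs.le_rel fun 𝔴 hw => (iInf_le _ (𝒯.m (𝒯.map Prod.fst 𝔴))).trans ?_
    rw [hmf]
    exact 𝒯.ihom_anti (le_iSup_of_le ⟨𝒯.map Prod.fst 𝔴, rfl⟩ (𝒯.le_Txi (fun 𝔵 (φ : Hat a) => φ.1 𝔵) 𝔴 rfl hw))
  · refine le_iInf fun 𝔵 => (𝒯.le_ihom_iff).mpr ?_
    rw [𝒯.tens_iSup_left]
    refine iSup_le fun ⟨𝔛, h𝔛⟩ => ?_
    have h := hhs.tens_Txi_eval_le 𝔛 𝔭 (mf y)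
    rw [h𝔛, hmf] at h
    exact h

lemma IsHatStr.rightAdjoint_apply (hhs : IsHatStr a hs) {y : X → Hat a} (hy : IsYoneda a y)
    {Y : Type u} {b : 𝒯.TCatStr Y} {g : Hat a → Y} {r : Y → Hat a} (hg : IsTFunctor hs b g)
    (hr : IsTFunctor b hs r) (hadj : IsAdjunction hs b g r) {f : X → Y}
    (hgf : FunEquiv b (g ∘ y) f) (w : Y) (𝔵 : T X) :
    (r w).1 𝔵 = b.rel (𝒯.map f 𝔵) w := by
  rw [← hhs.rel_map_yoneda hy, ← IsAdjunction.rel_map_eq hg hr hadj, ← 𝒯.map_comp]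
  exact (funEquiv_iff_rel_map_eq b).1 hgf 𝔵 w

lemma IsHatStr.funLE_of_isLeftAdjoint (hhs : IsHatStr a hs) {y : X → Hat a}
    (hy : IsYoneda a y) {Y : Type u} {b : 𝒯.TCatStr Y} {g g' : Hat a → Y} {f f' : X → Y}
    (hg : IsLeftAdjoint hs b g) (hgf : FunEquiv b (g ∘ y) f)
    (hg' : IsLeftAdjoint hs b g') (hgf' : FunEquiv b (g' ∘ y) f') (hff' : funLE b f f') :
    funLE b g g' := by
  obtain ⟨hgT, r, hr, hadj⟩ := hg
  obtain ⟨hg'T, r', hr', hadj'⟩ := hg'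
  refine (funLE_iff_rel_map_le b).2 fun 𝔭 w => ?_
  rw [IsAdjunction.rel_map_eq hgT hr hadj, IsAdjunction.rel_map_eq hg'T hr' hadj']
  refine hhs.rel_mono 𝔭 fun 𝔵 => ?_
  rw [hhs.rightAdjoint_apply hy hgT hr hadj hgf, hhs.rightAdjoint_apply hy hg'T hr' hadj' hgf']
  exact (funLE_iff_rel_map_le b).1 hff' 𝔵 w

end Presheaves

theorem statement4_general (𝒯 : TopTheory V T) {X Y : Type u}
    (a : 𝒯.TCatStr X) (b : 𝒯.TCatStr Y)
    (hs : 𝒯.TCatStr (Hat a)) (hhs : IsHatStr a hs)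
    (y : X → Hat a) (hy : IsYoneda a y)
    (hb : Cocomplete b)
    (f : X → Y) (hf : IsTFunctor a b f)
    (mf : Y → Hat a) (hmf : ∀ (y0 : Y) (𝔵 : T X), (mf y0).1 𝔵 = b.rel (𝒯.map f 𝔵) y0) :
    (∃ fL : Hat a → Y, IsTFunctor hs b fL ∧ IsTFunctor b hs mf ∧
        IsAdjunction hs b fL mf ∧ FunEquiv b (fL ∘ y) f) ∧
    (∀ g g' : Hat a → Y, IsLeftAdjoint hs b g → FunEquiv b (g ∘ y) f →
        IsLeftAdjoint hs b g' → FunEquiv b (g' ∘ y) f → FunEquiv b g g') ∧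
    (∀ (f' : X → Y) (fL fL' : Hat a → Y), IsTFunctor a b f' → funLE b f f' →
        IsLeftAdjoint hs b fL → FunEquiv b (fL ∘ y) f →
        IsLeftAdjoint hs b fL' → FunEquiv b (fL' ∘ y) f' → funLE b fL fL') := by
  obtain ⟨fL, hfL, hcolim⟩ := hb X (Hat a) a hs f hf _ hhs.isTModRel_eval
  have hfL_star : ∀ 𝔭 w, b.rel (𝒯.map fL 𝔭) w = hs.rel 𝔭 (mf w) :=
    fun 𝔭 w => (hcolim 𝔭 w).trans (hhs.extend_eval_eq hmf 𝔭 w)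
  obtain ⟨hmfT, hadj⟩ := isTFunctor_and_isAdjunction_of_rel_map_eq hfL_star
  have hfLy : FunEquiv b (fL ∘ y) f := (funEquiv_iff_rel_map_eq b).2 fun 𝔵 w => by
    rw [𝒯.map_comp, hfL_star, hhs.rel_map_yoneda hy, hmf]
  have hff : funLE b f f := fun _ _ => le_rfl
  refine ⟨⟨fL, hfL, hmfT, hadj, hfLy⟩, fun g g' hg hgf hg' hg'f 𝔶 ψ => ?_,
    fun f' g g' _ hff' hg hgf hg' hg'f => hhs.funLE_of_isLeftAdjoint hy hg hgf hg' hg'f hff'⟩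
  exact le_antisymm (hhs.funLE_of_isLeftAdjoint hy hg hgf hg' hg'f hff 𝔶 ψ)
    (hhs.funLE_of_isLeftAdjoint hy hg' hg'f hg hgf hff 𝔶 ψ)

/-- Theorem 3.1, Kan extension. Let `Y` be a cocomplete
`𝒯`-category. Composition with `y_X : X → X̂` defines an equivalence of ordered sets
from left adjoint `𝒯`-functors `X̂ → Y` to `𝒯`-functors `X → Y`: every `𝒯`-functor
`f : X → Y` has a left adjoint extension `f_L : X̂ → Y` with `f_L · y_X ≅ f`, whose
right adjoint is `⟨f_*⟩ : Y → X̂`; `f_L` is unique up to equivalence, and `f ≤ f'`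
implies `f_L ≤ f'_L`. -/
theorem statement4 (𝒯 : TopTheory V T) {X Y : Type u}
    (a : 𝒯.TCatStr X) (b : 𝒯.TCatStr Y)
    (hs : 𝒯.TCatStr (Hat a)) (hhs : IsHatStr a hs)
    (y : X → Hat a) (hy : IsYoneda a y) (hyf : IsTFunctor a hs y)
    (hb : Cocomplete b)
    (f : X → Y) (hf : IsTFunctor a b f)
    (mf : Y → Hat a) (hmf : ∀ (y0 : Y) (𝔵 : T X), (mf y0).1 𝔵 = b.rel (𝒯.map f 𝔵) y0) :
    (∃ fL : Hat a → Y, IsTFunctor hs b fL ∧ IsTFunctor b hs mf ∧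
        IsAdjunction hs b fL mf ∧ FunEquiv b (fL ∘ y) f) ∧
    (∀ g g' : Hat a → Y, IsLeftAdjoint hs b g → FunEquiv b (g ∘ y) f →
        IsLeftAdjoint hs b g' → FunEquiv b (g' ∘ y) f → FunEquiv b g g') ∧
    (∀ (f' : X → Y) (fL fL' : Hat a → Y), IsTFunctor a b f' → funLE b f f' →
        IsLeftAdjoint hs b fL → FunEquiv b (fL ∘ y) f →
        IsLeftAdjoint hs b fL' → FunEquiv b (fL' ∘ y) f' → funLE b fL fL') :=
  statement4_general 𝒯 a b hs hhs y hy hb f hf mf hmf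

end TopTheory

end Paper
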